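/- Let p ≥ 11 be a prime with p ≢ ±1 (mod 8), let S be the set of nonzero quadratic residues modulo p and N the set of quadratic non-residues modulo p, with elements identified with integers in {1,…,p−1}. Consider the tree T on vertex set {0,1,…,p−1} whose edges are: {0, x} for each x ∈ N and each x ∈ S with x > p/2, together with {s, 2s mod p} for each s ∈ S with s < p/2 (note 2s mod p ∈ N). Then the identity labelling b(v) = v is a near α-valuation of T; in particular, GF(p) is the disjoint union {0} ∪ S ∪ 2S, T is a tree with p vertices and p−1 edges, and the multiset of absolute edge-label differences equals {1,…,p−1}. -/

import Mathlib

open scoped Classical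

lemma aux_two_ns (p : ℕ) (hp : p.Prime) (hp11 : 11 ≤ p) (h1 : p % 8 ≠ 1) (h7 : p % 8 ≠ 7) :
    ¬ IsSquare (2 : ZMod p) := by
  haveI : Fact p.Prime := ⟨hp⟩
  rw [ZMod.exists_sq_eq_two_iff (by omega : p ≠ 2)]
  omega

lemma aux_ns_mul (p : ℕ) (hp : p.Prime) (hp11 : 11 ≤ p) (h2 : ¬ IsSquare (2 : ZMod p))
    {s : ZMod p} (hs : s ≠ 0) : IsSquare (2 * s) ↔ ¬ IsSquare s := by
  haveI : Fact p.Prime := ⟨hp⟩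
  have h2' : (2 : ZMod p) ≠ 0 := by
    intro h
    have hd : (p : ℕ) ∣ 2 := (ZMod.natCast_eq_zero_iff 2 p).mp (by exact_mod_cast h)
    have := Nat.le_of_dvd (by norm_num) hd
    omega
  have h2c : quadraticChar (ZMod p) 2 = -1 := quadraticChar_neg_one_iff_not_isSquare.mpr h2
  have hm : quadraticChar (ZMod p) (2 * s) = -1 * quadraticChar (ZMod p) s := by
    rw [map_mul, h2c]
  rcases quadraticChar_dichotomy hs with hc | hc
  · refine iff_of_false ?_ (not_not.mpr ((quadraticChar_one_iff_isSquare hs).mp hc))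
    intro hsq
    have := (quadraticChar_one_iff_isSquare (mul_ne_zero h2' hs)).mpr hsq
    rw [hm, hc] at this
    norm_num at this
  · refine iff_of_true ?_ (quadraticChar_neg_one_iff_not_isSquare.mp hc)
    refine (quadraticChar_one_iff_isSquare (mul_ne_zero h2' hs)).mp ?_
    rw [hm, hc]; norm_num

lemma acyclic_of_parent {V : Type*} (G : SimpleGraph V) (rk : V → ℕ) (par : V → V)
    (hE : ∀ u v, G.Adj u v → (rk u < rk v ∧ par v = u) ∨ (rk v < rk u ∧ par u = v)) :
    G.IsAcyclic := by
  intro v0 c0 hc0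
  have hne : c0.support.toFinset.Nonempty := ⟨v0, by simp⟩
  obtain ⟨u, hu, hmax⟩ := Finset.exists_max_image c0.support.toFinset rk hne
  rw [List.mem_toFinset] at hu
  set c := c0.rotate u hu with hcdef
  have hc : c.IsCycle := hc0.rotate hu
  have hnn : ¬ c.Nil := hc.not_nil
  have hlen : 3 ≤ c.length := hc.three_le_length
  have hmem : ∀ w, w ∈ c.support → rk w ≤ rk u := by
    intro w hw
    rw [SimpleGraph.Walk.support_eq_cons] at hw
    rw [List.mem_cons] at hw
    rcases hw with rfl | hw
    · exact le_refl _
    · refine hmax w (List.mem_toFinset.mpr ?_)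
      have : w ∈ c0.support.tail :=
        ((SimpleGraph.Walk.support_rotate c0 u hu).mem_iff).mp hw
      exact List.mem_of_mem_tail this
  have hrnn : ¬ c.reverse.Nil := by
    rw [SimpleGraph.Walk.not_nil_iff_lt_length, SimpleGraph.Walk.length_reverse]
    omega
  set y := c.getVert 1 with hy
  set z := c.reverse.getVert 1 with hz
  have hady : G.Adj u y := c.adj_snd hnn
  have hadz : G.Adj u z := c.reverse.adj_snd hrnn
  have hys : y ∈ c.support :=
    SimpleGraph.Walk.mem_support_iff_exists_getVert.mpr ⟨1, rfl, by omega⟩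
  have hzs : z ∈ c.support := by
    have : z ∈ c.reverse.support :=
      SimpleGraph.Walk.mem_support_iff_exists_getVert.mpr
        ⟨1, rfl, by rw [SimpleGraph.Walk.length_reverse]; omega⟩
    rwa [SimpleGraph.Walk.support_reverse, List.mem_reverse] at this
  have hpy : par u = y := by
    rcases hE u y hady with ⟨hlt, _⟩ | ⟨_, h⟩
    · exact absurd (hmem y hys) (not_le.mpr hlt)
    · exact h
  have hpz : par u = z := by
    rcases hE u z hadz with ⟨hlt, _⟩ | ⟨_, h⟩
    · exact absurd (hmem z hzs) (not_le.mpr hlt)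
    · exact h
  have hyz : y = z := hpy ▸ hpz
  -- decompose the cycle
  have hc2 : (SimpleGraph.Walk.cons (c.adj_snd hnn) c.tail).IsCycle := by
    rw [SimpleGraph.Walk.cons_tail_eq c hnn]; exact hc
  rw [SimpleGraph.Walk.cons_isCycle_iff] at hc2
  have hno : s(u, y) ∉ c.tail.edges := hc2.2
  -- edges equations
  have he1 : c.edges = s(u, y) :: c.tail.edges := by
    conv_lhs => rw [← SimpleGraph.Walk.cons_tail_eq c hnn]
    exact SimpleGraph.Walk.edges_cons _ _
  have he2 : c.reverse.edges = s(u, z) :: c.reverse.tail.edges := by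
    conv_lhs => rw [← SimpleGraph.Walk.cons_tail_eq c.reverse hrnn]
    exact SimpleGraph.Walk.edges_cons _ _
  have he3 : c.edges = (c.reverse.tail.edges).reverse ++ [s(u, z)] := by
    have := congrArg List.reverse he2
    rwa [SimpleGraph.Walk.edges_reverse, List.reverse_reverse, List.reverse_cons] at this
  have hlenR : c.reverse.tail.edges.reverse.length = c.length - 1 := by
    rw [List.length_reverse, SimpleGraph.Walk.length_edges]
    have := SimpleGraph.Walk.length_tail_add_one hrnn
    rw [SimpleGraph.Walk.length_reverse] at this
    omega
  rcases hR : c.reverse.tail.edges.reverse with _ | ⟨r0, R⟩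
  · rw [hR] at hlenR; simp at hlenR; omega
  · rw [he1, hR] at he3
    simp only [List.cons_append, List.cons.injEq] at he3
    apply hno
    rw [he3.2, hyz]
    simp

/-- A β-valuation (graceful labelling) of a graph `G` with `n` edges. -/
noncomputable def IsBetaValuation {V : Type*} [Fintype V] [DecidableEq V] (G : SimpleGraph V)
    [DecidableRel G.Adj] (n : ℕ) (b : V → ℕ) : Prop :=
  Function.Injective b ∧ (∀ v, b v ≤ n) ∧ G.edgeFinset.card = n ∧
    ((Finset.univ.filter fun p : V × V => G.Adj p.1 p.2 ∧ b p.1 < b p.2).val.map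
        fun p => b p.2 - b p.1) = (Finset.Icc 1 n).val

/-- `x` (as an integer in `{1,…,p-1}`) is a nonzero quadratic residue mod `p`. -/
def InQR (p x : ℕ) : Prop := 0 < x ∧ x < p ∧ IsSquare (x : ZMod p)

/-- `x` (as an integer in `{1,…,p-1}`) is a quadratic non-residue mod `p`. -/
def InQNR (p x : ℕ) : Prop := 0 < x ∧ x < p ∧ ¬ IsSquare (x : ZMod p)

/-- The edge relation of the cyclotomic tree: `0` is joined to every nonresidue and to every
residue greater than `p/2`, and each residue `s < p/2` is joined to `2s` (note `2s < p`). -/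
def CycRel (p a b : ℕ) : Prop :=
  (a = 0 ∧ InQNR p b) ∨ (a = 0 ∧ InQR p b ∧ p < 2 * b) ∨ (InQR p a ∧ 2 * a < p ∧ b = 2 * a)

/-- The cyclotomic tree `T` on vertex set `{0,1,…,p-1}`. -/
def Tgraph (p : ℕ) : SimpleGraph (Fin p) where
  Adj u v := u ≠ v ∧ (CycRel p u.val v.val ∨ CycRel p v.val u.val)
  symm := ⟨by rintro u v ⟨h1, h2⟩; exact ⟨Ne.symm h1, Or.symm h2⟩⟩
  loopless := ⟨fun u h => h.1 rfl⟩

/-- Theorem: for a prime `p ≥ 11` with `p ≢ ±1 (mod 8)`, (i) the nonresidues are exactly the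
doubled nonzero residues, so `GF(p)` is the disjoint union `{0} ∪ S ∪ 2S`; (ii) `T` is a tree
with `p` vertices and `p - 1` edges; (iii) the identity labelling is a β-valuation of `T`; and
(iv) it is a near α-valuation, with `V_small` consisting of `0` together with the residues
below `p/2`, and `V_large` the remaining vertices. -/
theorem cyclotomic_tree_near_alpha (p : ℕ) (hp : p.Prime) (hp11 : 11 ≤ p)
    (h1 : p % 8 ≠ 1) (h7 : p % 8 ≠ 7) :
    ({x : ZMod p | x ≠ 0 ∧ ¬ IsSquare x}
        = (fun s : ZMod p => 2 * s) '' {x : ZMod p | x ≠ 0 ∧ IsSquare x})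
    ∧ (Tgraph p).IsTree
    ∧ (Tgraph p).edgeFinset.card = p - 1
    ∧ IsBetaValuation (Tgraph p) (p - 1) (fun v : Fin p => v.val)
    ∧ (∀ v : Fin p, (v.val = 0 ∨ (InQR p v.val ∧ 2 * v.val < p)) →
        ∀ u : Fin p, (Tgraph p).Adj v u → v.val < u.val)
    ∧ (∀ v : Fin p, ¬(v.val = 0 ∨ (InQR p v.val ∧ 2 * v.val < p)) →
        ∀ u : Fin p, (Tgraph p).Adj v u → u.val < v.val) := by
  haveI : Fact p.Prime := ⟨hp⟩
  have hp0 : 0 < p := by omega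
  have hp2 : p % 2 = 1 := Nat.odd_iff.mp (hp.odd_of_ne_two (by omega))
  have h2ns : ¬ IsSquare (2 : ZMod p) := aux_two_ns p hp hp11 h1 h7
  have h2' : (2 : ZMod p) ≠ 0 := by
    intro h
    have hd : (p : ℕ) ∣ 2 := (ZMod.natCast_eq_zero_iff 2 p).mp (by exact_mod_cast h)
    have := Nat.le_of_dvd (by norm_num) hd
    omega
  have hmul : ∀ {s : ZMod p}, s ≠ 0 → (IsSquare (2 * s) ↔ ¬ IsSquare s) :=
    fun hs => aux_ns_mul p hp hp11 h2ns hs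
  have hcast_ne : ∀ {x : ℕ}, 0 < x → x < p → ((x : ZMod p) ≠ 0) := by
    intro x hx hxp h
    have hd := (ZMod.natCast_eq_zero_iff x p).mp h
    have := Nat.le_of_dvd hx hd
    omega
  -- part (i)
  have part1 : ({x : ZMod p | x ≠ 0 ∧ ¬ IsSquare x}
      = (fun s : ZMod p => 2 * s) '' {x : ZMod p | x ≠ 0 ∧ IsSquare x}) := by
    ext x
    simp only [Set.mem_setOf_eq, Set.mem_image]
    constructor
    · rintro ⟨hx0, hxns⟩
      have hsne : (2⁻¹ * x : ZMod p) ≠ 0 := mul_ne_zero (inv_ne_zero h2') hx0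
      have hx' : (2 : ZMod p) * (2⁻¹ * x) = x := by
        rw [← mul_assoc, mul_inv_cancel₀ h2', one_mul]
      refine ⟨2⁻¹ * x, ⟨hsne, ?_⟩, hx'⟩
      have hiff := hmul hsne
      rw [hx'] at hiff
      by_contra hns
      exact hxns (hiff.mpr hns)
    · rintro ⟨s, ⟨hs0, hssq⟩, rfl⟩
      exact ⟨mul_ne_zero h2' hs0, fun hsq => (hmul hs0).mp hsq hssq⟩
  -- doubling a small residue gives a nonresidue
  have hdouble : ∀ x : ℕ, 0 < x → x < p → IsSquare ((x : ZMod p)) →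
      ¬ IsSquare (((2 * x : ℕ) : ZMod p)) := by
    intro x hx hxp hsq hsq2
    have hc : ((2 * x : ℕ) : ZMod p) = 2 * (x : ZMod p) := by push_cast; ring
    rw [hc] at hsq2
    exact (hmul (hcast_ne hx hxp)).mp hsq2 hsq
  have hcyc_lt : ∀ a b : ℕ, CycRel p a b → a < b := by
    rintro a b (⟨rfl, hb⟩ | ⟨rfl, hb, _⟩ | ⟨ha, h2a, rfl⟩)
    · exact hb.1
    · exact hb.1
    · have := ha.1; omega
  have hadj_iff : ∀ u v : Fin p, ((Tgraph p).Adj u v ∧ u.val < v.val) ↔ CycRel p u.val v.val := by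
    intro u v
    constructor
    · rintro ⟨⟨hne, hor | hor⟩, hlt⟩
      · exact hor
      · exact absurd (hcyc_lt _ _ hor) (by omega)
    · intro h
      have hlt := hcyc_lt _ _ h
      exact ⟨⟨fun he => by rw [he] at hlt; omega, Or.inl h⟩, hlt⟩
  -- the function enumerating edges by their difference
  let f : ℕ → Fin p × Fin p := fun d =>
    if h : InQR p d ∧ 2 * d < p then (⟨d, h.1.2.1⟩, ⟨2 * d, h.2⟩)
    else (⟨0, hp0⟩, ⟨d % p, Nat.mod_lt d hp0⟩)
  have hf_cyc : ∀ d, 1 ≤ d → d ≤ p - 1 → CycRel p (f d).1.val (f d).2.val := by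
    intro d hd1 hdn
    have hdp : d < p := by omega
    have hmod : d % p = d := Nat.mod_eq_of_lt hdp
    by_cases h : InQR p d ∧ 2 * d < p
    · simp only [f, dif_pos h]
      exact Or.inr (Or.inr ⟨h.1, h.2, rfl⟩)
    · simp only [f, dif_neg h, hmod]
      by_cases hs : IsSquare ((d : ZMod p))
      · refine Or.inr (Or.inl ⟨rfl, ⟨by omega, hdp, hs⟩, ?_⟩)
        have hnlt : ¬ 2 * d < p := fun hlt => h ⟨⟨by omega, hdp, hs⟩, hlt⟩
        omega
      · exact Or.inl ⟨rfl, by omega, hdp, hs⟩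
  have hf_diff : ∀ d, 1 ≤ d → d ≤ p - 1 → (f d).2.val - (f d).1.val = d := by
    intro d hd1 hdn
    by_cases h : InQR p d ∧ 2 * d < p
    · simp only [f, dif_pos h]; omega
    · simp only [f, dif_neg h]
      simp [Nat.mod_eq_of_lt (show d < p by omega)]
  have himg : ∀ q : Fin p × Fin p, CycRel p q.1.val q.2.val →
      ∃ d, (1 ≤ d ∧ d ≤ p - 1) ∧ f d = q := by
    rintro ⟨u, v⟩ h
    dsimp only at h ⊢
    rcases h with ⟨hu0, hb⟩ | ⟨hu0, hb, hpb⟩ | ⟨ha, h2a, hb⟩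
    · refine ⟨v.val, ⟨hb.1, by have := hb.2.1; omega⟩, ?_⟩
      have hnot : ¬ (InQR p v.val ∧ 2 * v.val < p) := fun hc => hb.2.2 hc.1.2.2
      simp only [f, dif_neg hnot]
      refine Prod.ext (Fin.ext ?_) (Fin.ext ?_)
      · exact hu0.symm
      · exact Nat.mod_eq_of_lt v.isLt
    · refine ⟨v.val, ⟨hb.1, by have := hb.2.1; omega⟩, ?_⟩
      have hnot : ¬ (InQR p v.val ∧ 2 * v.val < p) := fun hc => by omega
      simp only [f, dif_neg hnot]
      refine Prod.ext (Fin.ext ?_) (Fin.ext ?_)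
      · exact hu0.symm
      · exact Nat.mod_eq_of_lt v.isLt
    · refine ⟨u.val, ⟨ha.1, by have := ha.2.1; omega⟩, ?_⟩
      have hcond : InQR p u.val ∧ 2 * u.val < p := ⟨ha, h2a⟩
      simp only [f, dif_pos hcond]
      refine Prod.ext (Fin.ext rfl) (Fin.ext hb.symm)
  have hfinj : Set.InjOn f (Finset.Icc 1 (p - 1) : Finset ℕ) := by
    intro a ha b hb hab
    simp only [Finset.coe_Icc, Set.mem_Icc] at ha hb
    by_cases ja : InQR p a ∧ 2 * a < p <;> by_cases jb : InQR p b ∧ 2 * b < p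
    · simp only [f, dif_pos ja, dif_pos jb, Prod.mk.injEq, Fin.mk.injEq] at hab
      exact hab.1
    · simp only [f, dif_pos ja, dif_neg jb, Prod.mk.injEq, Fin.mk.injEq] at hab
      have := ja.1.1; omega
    · simp only [f, dif_neg ja, dif_pos jb, Prod.mk.injEq, Fin.mk.injEq] at hab
      have := jb.1.1; omega
    · simp only [f, dif_neg ja, dif_neg jb, Prod.mk.injEq, Fin.mk.injEq] at hab
      have h2 := hab.2
      rw [Nat.mod_eq_of_lt (show a < p by omega), Nat.mod_eq_of_lt (show b < p by omega)] at h2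
      exact h2
  -- the filtered set of ordered pairs
  have hFset : (Finset.univ.filter fun q : Fin p × Fin p =>
      (Tgraph p).Adj q.1 q.2 ∧ q.1.val < q.2.val) = (Finset.Icc 1 (p - 1)).image f := by
    ext q
    simp only [Finset.mem_filter, Finset.mem_univ, true_and, Finset.mem_image, Finset.mem_Icc]
    constructor
    · intro hq
      obtain ⟨d, hd, hfd⟩ := himg q ((hadj_iff q.1 q.2).mp hq)
      exact ⟨d, hd, hfd⟩
    · rintro ⟨d, hd, rfl⟩
      exact (hadj_iff _ _).mpr (hf_cyc d hd.1 hd.2)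
  have hFcard : (Finset.univ.filter fun q : Fin p × Fin p =>
      (Tgraph p).Adj q.1 q.2 ∧ q.1.val < q.2.val).card = p - 1 := by
    rw [hFset, Finset.card_image_of_injOn hfinj, Nat.card_Icc]
    omega
  -- edge finset
  have hedge : (Tgraph p).edgeFinset = (Finset.univ.filter fun q : Fin p × Fin p =>
      (Tgraph p).Adj q.1 q.2 ∧ q.1.val < q.2.val).image (fun q => s(q.1, q.2)) := by
    ext e
    induction e using Sym2.ind with
    | _ u v =>
      simp only [SimpleGraph.mem_edgeFinset, SimpleGraph.mem_edgeSet, Finset.mem_image]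
      constructor
      · intro h
        have hne : u.val ≠ v.val := fun he => h.1 (Fin.ext he)
        rcases Nat.lt_or_ge u.val v.val with hlt | hge
        · exact ⟨(u, v), Finset.mem_filter.mpr ⟨Finset.mem_univ _, h, hlt⟩, rfl⟩
        · refine ⟨(v, u), Finset.mem_filter.mpr ⟨Finset.mem_univ _, h.symm, by dsimp only; omega⟩,
            Sym2.eq_swap⟩
      · rintro ⟨⟨a, b⟩, hq, he⟩
        have hab := (Finset.mem_filter.mp hq).2.1
        rcases Sym2.eq_iff.mp he with ⟨rfl, rfl⟩ | ⟨rfl, rfl⟩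
        · exact hab
        · exact hab.symm
  have hedgecard : (Tgraph p).edgeFinset.card = p - 1 := by
    rw [hedge, Finset.card_image_of_injOn, hFcard]
    intro q hq r hr he
    simp only [Finset.coe_filter, Set.mem_setOf_eq] at hq hr
    rcases Sym2.eq_iff.mp he with ⟨h1, h2⟩ | ⟨h1, h2⟩
    · exact Prod.ext h1 h2
    · exfalso
      have hq2 := hq.2.2
      have hr2 := hr.2.2
      rw [← h1, ← h2] at hr2
      omega
  -- connectivity
  have hconn : (Tgraph p).Connected := by
    rw [SimpleGraph.connected_iff]
    refine ⟨?_, ⟨⟨0, hp0⟩⟩⟩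
    have hreach : ∀ v : Fin p, (Tgraph p).Reachable ⟨0, hp0⟩ v := by
      intro v
      by_cases hv0 : v = ⟨0, hp0⟩
      · rw [hv0]
      have hvpos : 0 < v.val := Nat.pos_of_ne_zero (fun h => hv0 (Fin.ext h))
      by_cases hs : IsSquare ((v.val : ZMod p))
      · by_cases h2v : 2 * v.val < p
        · have hQR : InQR p v.val := ⟨hvpos, v.isLt, hs⟩
          have hadj1 : (Tgraph p).Adj v ⟨2 * v.val, h2v⟩ := by
            refine ⟨fun he => ?_, Or.inl (Or.inr (Or.inr ⟨hQR, h2v, rfl⟩))⟩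
            have := congrArg Fin.val he
            simp at this
            omega
          have hadj0 : (Tgraph p).Adj ⟨0, hp0⟩ ⟨2 * v.val, h2v⟩ := by
            refine ⟨fun he => ?_, Or.inl (Or.inl ⟨rfl, by show 0 < 2 * v.val; omega, h2v, hdouble v.val hvpos v.isLt hs⟩)⟩
            have := congrArg Fin.val he
            dsimp only at this
            omega
          exact hadj0.reachable.trans hadj1.reachable.symm
        · have h2v' : p ≤ 2 * v.val := Nat.le_of_not_lt h2v
          have hadj : (Tgraph p).Adj ⟨0, hp0⟩ v := by
            refine ⟨fun he => hv0 he.symm, Or.inl (Or.inr (Or.inl ⟨rfl, ⟨hvpos, v.isLt, hs⟩, ?_⟩))⟩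
            omega
          exact hadj.reachable
      · have hadj : (Tgraph p).Adj ⟨0, hp0⟩ v := by
          exact ⟨fun he => hv0 he.symm, Or.inl (Or.inl ⟨rfl, hvpos, v.isLt, hs⟩)⟩
        exact hadj.reachable
    intro u v
    exact (hreach u).symm.trans (hreach v)
  -- acyclicity via rank and parent
  let rk : Fin p → ℕ := fun v => if v.val = 0 then 0 else
    if InQR p v.val ∧ 2 * v.val < p then 2 else 1
  let par : Fin p → Fin p := fun v =>
    if h : InQR p v.val ∧ 2 * v.val < p then ⟨2 * v.val, h.2⟩ else ⟨0, hp0⟩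
  have hE : ∀ u v, (Tgraph p).Adj u v →
      (rk u < rk v ∧ par v = u) ∨ (rk v < rk u ∧ par u = v) := by
    have key : ∀ u v : Fin p, CycRel p u.val v.val →
        (rk u < rk v ∧ par v = u) ∨ (rk v < rk u ∧ par u = v) := by
      rintro u v (⟨hu0, hb⟩ | ⟨hu0, hb, hpb⟩ | ⟨ha, h2a, hb⟩)
      · left
        have hnv : ¬ (InQR p v.val ∧ 2 * v.val < p) := fun hc => hb.2.2 hc.1.2.2
        have hbv : v.val ≠ 0 := by have := hb.1; omega
        constructor
        · simp [rk, hu0, hbv, hnv, -Fin.val_eq_zero_iff]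
        · simp only [par, dif_neg hnv]
          exact Fin.ext hu0.symm
      · left
        have hnv : ¬ (InQR p v.val ∧ 2 * v.val < p) := fun hc => by omega
        have hbv : v.val ≠ 0 := by have := hb.1; omega
        constructor
        · simp [rk, hu0, hbv, hnv, -Fin.val_eq_zero_iff]
        · simp only [par, dif_neg hnv]
          exact Fin.ext hu0.symm
      · right
        have hu0 : u.val ≠ 0 := by have := ha.1; omega
        have hv0 : v.val ≠ 0 := by have := ha.1; omega
        have hnv : ¬ (InQR p v.val ∧ 2 * v.val < p) := by
          rintro ⟨hQR, _⟩
          refine hdouble u.val ha.1 (by omega) ha.2.2 ?_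
          rw [← hb]
          exact hQR.2.2
        constructor
        · simp [rk, hu0, hv0, hnv, ha, h2a, -Fin.val_eq_zero_iff]
        · simp only [par, dif_pos (And.intro ha h2a)]
          exact Fin.ext hb.symm
    rintro u v ⟨hne, h | h⟩
    · exact key u v h
    · exact (key v u h).symm
  have htree : (Tgraph p).IsTree := ⟨hconn, acyclic_of_parent _ rk par hE⟩
  -- assemble
  refine ⟨part1, htree, hedgecard, ⟨?_, ?_, hedgecard, ?_⟩, ?_, ?_⟩
  · exact fun a b h => Fin.ext h
  · intro v
    show v.val ≤ p - 1
    have := v.isLt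
    omega
  · -- multiset of differences
    show ((Finset.univ.filter fun q : Fin p × Fin p =>
        (Tgraph p).Adj q.1 q.2 ∧ q.1.val < q.2.val).val.map
        fun q : Fin p × Fin p => q.2.val - q.1.val) = (Finset.Icc 1 (p - 1)).val
    have hnodup : ((Finset.Icc 1 (p - 1)).val.map f).Nodup := by
      refine Multiset.Nodup.map_on ?_ (Finset.Icc 1 (p - 1)).nodup
      intro a ha b hb
      exact hfinj (by simpa using ha) (by simpa using hb)
    have himg_val : ((Finset.Icc 1 (p - 1)).image f).val = (Finset.Icc 1 (p - 1)).val.map f := by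
      rw [Finset.image_val, Multiset.dedup_eq_self.mpr hnodup]
    rw [hFset, himg_val, Multiset.map_map]
    have : ∀ d ∈ (Finset.Icc 1 (p - 1)).val,
        ((fun q : Fin p × Fin p => q.2.val - q.1.val) ∘ f) d = id d := by
      intro d hd
      rw [← Finset.mem_def, Finset.mem_Icc] at hd
      exact hf_diff d hd.1 hd.2
    rw [Multiset.map_congr rfl this, Multiset.map_id]
  · -- small vertices
    rintro v hv u ⟨hne, h | h⟩
    · exact hcyc_lt _ _ h
    · exfalso
      rcases h with ⟨hu0, hb⟩ | ⟨hu0, hb, hpb⟩ | ⟨ha, h2a, hb⟩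
      · rcases hv with hv | hv
        · exact hb.1.ne' (by omega)
        · exact hb.2.2 hv.1.2.2
      · rcases hv with hv | hv
        · exact hb.1.ne' (by omega)
        · omega
      · rcases hv with hv | hv
        · have := ha.1; omega
        · refine hdouble u.val ha.1 (by omega) ha.2.2 ?_
          rw [← hb]
          exact hv.1.2.2
  · -- large vertices
    rintro v hv u ⟨hne, h | h⟩
    · exfalso
      rcases h with ⟨hv0, hb⟩ | ⟨hv0, hb, hpb⟩ | ⟨ha, h2a, hb⟩
      · exact hv (Or.inl hv0)
      · exact hv (Or.inl hv0)
      · exact hv (Or.inr ⟨ha, h2a⟩)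
    · exact hcyc_lt _ _ h
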